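/- Let F be an expanding 3-satisfiable weighted CNF formula that is not fat, i.e., w(F_s) < (18/133)(|V1| + |V2|). Then there exists an assignment tau with sat_tau(F) >= (2/3) w(F) + (2/453) |V(F)|. -/

import Mathlib

/-!
Three assignments are compared. Setting each unit variable true with probability `2/3` and every
other variable with probability `1/2` satisfies each hard clause with probability at least `2/3`
and, by 3-satisfiability, each soft clause with probability at least `19/27`. The hard clauses
alone do better under two mixed strategies: a uniformly random assignment of the non-unit
variables followed by the best value of each unit variable gains `1/6` per unit variable, and a
`2/3`-biased assignment of the unit variables followed by the best value of each `y ∈ V₂` gains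
`2/9` per such `y`, because the weight difference `∑ₓ (w{¬x, y} - w{¬x, ¬y})` over the unit
variables set true is anticoncentrated. Mixing them `4/7 : 3/7` gives
`sat(F_h) ≥ 2/3 w(F_h) + 2/21 (|V₁| + |V₂|)`. Averaging with the first assignment, expansion
(`|V(F)| ≤ |V₁| + |V₂| + w(F_s)`) and `w(F_s) < 18/133 (|V₁| + |V₂|)` give the theorem.
-/

open Classical

/-- A clause: a finite set of literals, each a (variable, polarity) pair. -/
abbrev Clause := Finset (ℕ × Bool)

/-- A truth assignment satisfies a clause if some literal evaluates to true. -/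
def SatC (τ : ℕ → Bool) (C : Clause) : Prop := ∃ l ∈ C, τ l.1 = l.2

/-- A CNF formula: clauses are nonempty and contain no variable together with its negation. -/
def IsCNF (F : Finset Clause) : Prop :=
  ∀ C ∈ F, C.Nonempty ∧ ∀ v : ℕ, ¬((v, true) ∈ C ∧ (v, false) ∈ C)

/-- Total weight of a set of clauses. -/
def wt (w : Clause → ℕ) (G : Finset Clause) : ℕ := ∑ C ∈ G, w C

/-- Total weight of the clauses of `G` satisfied by `τ`. -/
noncomputable def satWt (w : Clause → ℕ) (τ : ℕ → Bool) (G : Finset Clause) : ℕ :=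
  ∑ C ∈ G.filter (fun C => SatC τ C), w C

/-- `F` is 2-satisfiable. -/
def Sat2 (F : Finset Clause) : Prop :=
  ∀ C1 ∈ F, ∀ C2 ∈ F, ∃ τ, SatC τ C1 ∧ SatC τ C2

/-- `F` is 3-satisfiable. -/
def Sat3 (F : Finset Clause) : Prop :=
  ∀ C1 ∈ F, ∀ C2 ∈ F, ∀ C3 ∈ F, ∃ τ, SatC τ C1 ∧ SatC τ C2 ∧ SatC τ C3

/-- The set of variables of a formula. -/
def vars (F : Finset Clause) : Finset ℕ := F.sup (fun C => C.image Prod.fst)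

/-- The set of clauses of `F` containing a variable of `U`. -/
noncomputable def FU (F : Finset Clause) (U : Finset ℕ) : Finset Clause :=
  F.filter (fun C => ∃ l ∈ C, l.1 ∈ U)

/-- Unit variables: variables occurring in unit clauses. -/
def unitVars (F : Finset Clause) : Finset ℕ :=
  (F.filter (fun C => C.card = 1)).sup (fun C => C.image Prod.fst)

/-- All unit clauses of `F` are positive. -/
def UnitPos (F : Finset Clause) : Prop :=
  ∀ C ∈ F, C.card = 1 → ∃ x, C = {(x, true)}

/-- A hard clause: a positive unit clause, or a two-literal clause `{¬x, y}` / `{¬x, ¬y}`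
with `x` a unit variable and `y` not a unit variable. -/
def IsHard (F : Finset Clause) (C : Clause) : Prop :=
  (∃ x, C = {(x, true)}) ∨
  (∃ x ∈ unitVars F, ∃ y ∉ unitVars F, ∃ b : Bool, C = {(x, false), (y, b)})

/-- The soft (non-hard) clauses of `F`. -/
noncomputable def softF (F : Finset Clause) : Finset Clause :=
  F.filter (fun C => ¬ IsHard F C)

/-- Two-literal hard clauses. -/
noncomputable def F2set (F : Finset Clause) : Finset Clause :=
  F.filter (fun C => ∃ x ∈ unitVars F, ∃ y ∉ unitVars F, ∃ b : Bool, C = {(x, false), (y, b)})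

/-- Non-unit variables occurring in two-literal hard clauses. -/
noncomputable def V2set (F : Finset Clause) : Finset ℕ :=
  ((F2set F).sup (fun C => C.image Prod.fst)) \ unitVars F

/-- `F` is a hard formula: every clause is hard. -/
def HardFormula (F : Finset Clause) : Prop := ∀ C ∈ F, IsHard F C

/-- `F` is expanding: every set `X` of variables is covered by clauses of total weight at least `|X|`. -/
def Expanding (F : Finset Clause) (w : Clause → ℕ) : Prop :=
  ∀ X ⊆ vars F, X.card ≤ wt w (FU F X)

/-- Extend an assignment on the variables of `F` to all of `ℕ`. -/
noncomputable def extAssign (F : Finset Clause) (α : {v // v ∈ vars F} → Bool) : ℕ → Bool :=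
  fun n => if h : n ∈ vars F then α ⟨n, h⟩ else false

/-- The probability that the random assignment (unit variables true with probability 2/3,
other variables true with probability 1/2, independently) satisfies the clause `C`. -/
noncomputable def probSat (F : Finset Clause) (C : Clause) : ℝ :=
  ∑ α : {v // v ∈ vars F} → Bool,
    (∏ v : {v // v ∈ vars F},
      (if (v : ℕ) ∈ unitVars F then (if α v then (2:ℝ)/3 else 1/3) else 1/2)) *
    (if SatC (extAssign F α) C then 1 else 0)

section SubsetExpect

variable {α : Type*} [DecidableEq α]

/-- The expectation of `f` at a random subset of `s` that contains each `v ∈ s` independently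
with probability `p v`. -/
noncomputable def subsetExpect (s : Finset α) (p : α → ℝ) (f : Finset α → ℝ) : ℝ :=
  ∑ A ∈ s.powerset, ((∏ v ∈ A, p v) * ∏ v ∈ s \ A, (1 - p v)) * f A

variable {s : Finset α} {p : α → ℝ}

lemma subsetExpect_congr {f g : Finset α → ℝ} (h : ∀ A ⊆ s, f A = g A) :
    subsetExpect s p f = subsetExpect s p g :=
  Finset.sum_congr rfl fun A hA => by rw [h A (Finset.mem_powerset.1 hA)]

lemma subsetExpect_const (c : ℝ) : subsetExpect s p (fun _ => c) = c := by
  rw [subsetExpect, ← Finset.sum_mul, ← Finset.prod_add]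
  simp

lemma subsetExpect_add (f g : Finset α → ℝ) :
    subsetExpect s p (fun A => f A + g A) = subsetExpect s p f + subsetExpect s p g := by
  simp only [subsetExpect, mul_add, Finset.sum_add_distrib]

lemma subsetExpect_const_mul (c : ℝ) (f : Finset α → ℝ) :
    subsetExpect s p (fun A => c * f A) = c * subsetExpect s p f := by
  simp only [subsetExpect, Finset.mul_sum]
  exact Finset.sum_congr rfl fun _ _ => by ring

lemma subsetExpect_sub (f g : Finset α → ℝ) :
    subsetExpect s p (fun A => f A - g A) = subsetExpect s p f - subsetExpect s p g := by
  simp only [subsetExpect, mul_sub, Finset.sum_sub_distrib]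

lemma subsetExpect_sum {ι : Type*} (t : Finset ι) (f : ι → Finset α → ℝ) :
    subsetExpect s p (fun A => ∑ i ∈ t, f i A) = ∑ i ∈ t, subsetExpect s p (f i) := by
  simp only [subsetExpect, Finset.mul_sum]
  exact Finset.sum_comm

lemma subsetExpect_insert {x : α} (hx : x ∉ s) (f : Finset α → ℝ) :
    subsetExpect (insert x s) p f
      = p x * subsetExpect s p (fun A => f (insert x A)) + (1 - p x) * subsetExpect s p f := by
  simp only [subsetExpect, Finset.sum_powerset_insert hx, Finset.mul_sum]
  rw [add_comm]
  congr 1 <;> refine Finset.sum_congr rfl fun A hA => ?_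
  · have hxA : x ∉ A := fun h => hx (Finset.mem_powerset.1 hA h)
    rw [Finset.insert_sdiff_insert, Finset.sdiff_insert_of_notMem hx, Finset.prod_insert hxA]
    ring
  · have hxA : x ∉ s \ A := fun h => hx (Finset.mem_sdiff.1 h).1
    rw [Finset.insert_sdiff_of_notMem _ (fun h => hx (Finset.mem_powerset.1 hA h)),
      Finset.prod_insert hxA]
    ring

lemma subsetExpect_of_mem {x : α} (hx : x ∈ s) (f : Finset α → ℝ) :
    subsetExpect s p f = p x * subsetExpect (s.erase x) p (fun A => f (insert x A))
      + (1 - p x) * subsetExpect (s.erase x) p f := by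
  conv_lhs => rw [← Finset.insert_erase hx]
  exact subsetExpect_insert (Finset.notMem_erase _ _) f

lemma subsetExpect_eq_erase {x : α} (hx : x ∈ s) (f : Finset α → ℝ) :
    subsetExpect s p f
      = subsetExpect (s.erase x) p (fun A => p x * f (insert x A) + (1 - p x) * f A) := by
  rw [subsetExpect_of_mem hx, subsetExpect_add, subsetExpect_const_mul, subsetExpect_const_mul]

lemma subsetExpect_ite_mem {x : α} (hx : x ∈ s) (c c' : ℝ) :
    subsetExpect s p (fun A => if x ∈ A then c else c') = p x * c + (1 - p x) * c' := by
  rw [subsetExpect_of_mem hx, subsetExpect_congr (g := fun _ => c) (by simp),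
    subsetExpect_congr (g := fun _ => c') fun A hA => if_neg fun h => by simpa using hA h,
    subsetExpect_const, subsetExpect_const]

lemma subsetExpect_sum_mem (h : α → ℝ) :
    subsetExpect s p (fun A => ∑ x ∈ A, h x) = ∑ x ∈ s, p x * h x := by
  have hA : ∀ A ⊆ s, ∑ x ∈ A, h x = ∑ x ∈ s, if x ∈ A then h x else 0 := fun A hA => by
    rw [← Finset.sum_filter, Finset.filter_mem_eq_inter, Finset.inter_eq_right.2 hA]
  rw [subsetExpect_congr hA, subsetExpect_sum]
  exact Finset.sum_congr rfl fun x hx => by rw [subsetExpect_ite_mem hx]; ring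

lemma subsetExpect_prod {ι : Type*} [DecidableEq ι] (φ : ι → α) (f : ι → Bool → ℝ)
    (L : Finset ι) (hinj : Set.InjOn φ L) (hmem : ∀ i ∈ L, φ i ∈ s) :
    subsetExpect s p (fun A => ∏ i ∈ L, f i (decide (φ i ∈ A)))
      = ∏ i ∈ L, (p (φ i) * f i true + (1 - p (φ i)) * f i false) := by
  induction L using Finset.induction_on generalizing s with
  | empty => simp [subsetExpect_const]
  | @insert i L hi ih =>
    have hφi : ∀ j ∈ L, φ j ≠ φ i := fun j hj h =>
      hi (hinj (Finset.mem_insert_of_mem hj) (Finset.mem_insert_self i L) h ▸ hj)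
    have hL : ∀ (A : Finset α), φ i ∉ A → ∏ j ∈ L, f j (decide (φ j ∈ insert (φ i) A))
        = ∏ j ∈ L, f j (decide (φ j ∈ A)) := fun A _ =>
      Finset.prod_congr rfl fun j hj => by simp [hφi j hj]
    have ih' := ih (s := s.erase (φ i)) (hinj.mono (by simp)) fun j hj =>
      Finset.mem_erase.2 ⟨hφi j hj, hmem j (Finset.mem_insert_of_mem hj)⟩
    have hin : subsetExpect (s.erase (φ i)) p
        (fun A => ∏ j ∈ insert i L, f j (decide (φ j ∈ insert (φ i) A)))
          = f i true * ∏ j ∈ L, (p (φ j) * f j true + (1 - p (φ j)) * f j false) := by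
      rw [← ih', ← subsetExpect_const_mul]
      refine subsetExpect_congr fun A hA => ?_
      rw [Finset.prod_insert hi, hL A fun h => by simpa using hA h]
      simp
    have hout : subsetExpect (s.erase (φ i)) p (fun A => ∏ j ∈ insert i L, f j (decide (φ j ∈ A)))
        = f i false * ∏ j ∈ L, (p (φ j) * f j true + (1 - p (φ j)) * f j false) := by
      rw [← ih', ← subsetExpect_const_mul]
      refine subsetExpect_congr fun A hA => ?_
      rw [Finset.prod_insert hi, decide_eq_false fun h => by simpa using hA h]
    rw [subsetExpect_of_mem (hmem i (Finset.mem_insert_self i L)), hin, hout,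
      Finset.prod_insert hi]
    ring

lemma subsetExpect_weight_nonneg (hp0 : ∀ v, 0 ≤ p v) (hp1 : ∀ v, p v ≤ 1) (A : Finset α) :
    0 ≤ (∏ v ∈ A, p v) * ∏ v ∈ s \ A, (1 - p v) :=
  mul_nonneg (Finset.prod_nonneg fun v _ => hp0 v)
    (Finset.prod_nonneg fun v _ => sub_nonneg.2 (hp1 v))

lemma subsetExpect_mono (hp0 : ∀ v, 0 ≤ p v) (hp1 : ∀ v, p v ≤ 1)
    {f g : Finset α → ℝ} (h : ∀ A ⊆ s, f A ≤ g A) :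
    subsetExpect s p f ≤ subsetExpect s p g :=
  Finset.sum_le_sum fun A hA => mul_le_mul_of_nonneg_left (h A (Finset.mem_powerset.1 hA))
    (subsetExpect_weight_nonneg hp0 hp1 A)

lemma subsetExpect_le_const (hp0 : ∀ v, 0 ≤ p v) (hp1 : ∀ v, p v ≤ 1)
    {f : Finset α → ℝ} {c : ℝ} (h : ∀ A ⊆ s, f A ≤ c) :
    subsetExpect s p f ≤ c :=
  (subsetExpect_mono hp0 hp1 h).trans_eq (subsetExpect_const c)

lemma max_le_subsetExpect_max (hp0 : ∀ v, 0 ≤ p v) (hp1 : ∀ v, p v ≤ 1)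
    (f : Finset α → ℝ) (c : ℝ) :
    max (subsetExpect s p f) c ≤ subsetExpect s p (fun A => max (f A) c) :=
  max_le (subsetExpect_mono hp0 hp1 fun _ _ => le_max_left _ _)
    ((subsetExpect_const c).symm.trans_le (subsetExpect_mono hp0 hp1 fun _ _ => le_max_right _ _))

lemma exists_subsetExpect_le (hp0 : ∀ v, 0 ≤ p v) (hp1 : ∀ v, p v ≤ 1)
    (f : Finset α → ℝ) : ∃ A ⊆ s, subsetExpect s p f ≤ f A := by
  by_contra! h
  have hlt : subsetExpect s p f < subsetExpect s p (fun _ => subsetExpect s p f) := by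
    refine Finset.sum_lt_sum (fun A hA => mul_le_mul_of_nonneg_left
      (h A (Finset.mem_powerset.1 hA)).le (subsetExpect_weight_nonneg hp0 hp1 A)) ?_
    have hmass : ∑ A ∈ s.powerset, (∏ v ∈ A, p v) * ∏ v ∈ s \ A, (1 - p v) ≠ 0 := by
      simp [← Finset.prod_add]
    obtain ⟨A, hA, hA0⟩ := Finset.exists_ne_zero_of_sum_ne_zero hmass
    exact ⟨A, hA, mul_lt_mul_of_pos_left (h A (Finset.mem_powerset.1 hA))
      ((subsetExpect_weight_nonneg hp0 hp1 A).lt_of_ne' hA0)⟩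
  rw [subsetExpect_const] at hlt
  exact hlt.false

end SubsetExpect

section RandomSubsetBounds

variable {α : Type*} [DecidableEq α] {s : Finset α}

lemma sum_insert_of_subset_erase {v : α → ℤ} {x : α} {A : Finset α} (hA : A ⊆ s.erase x) :
    ∑ y ∈ insert x A, v y = v x + ∑ y ∈ A, v y :=
  Finset.sum_insert fun h => by simpa using hA h

lemma subsetExpect_sum_eq_le {c : ℝ} (hc0 : 0 ≤ c) (hc1 : c ≤ 1) {v : α → ℤ} {x : α}
    (hx : x ∈ s) (hv : v x ≠ 0) (z : ℤ) :
    subsetExpect s (fun _ => c) (fun A => if ∑ y ∈ A, v y = z then 1 else 0)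
      ≤ max c (1 - c) := by
  rw [subsetExpect_eq_erase hx]
  refine subsetExpect_le_const (fun _ => hc0) (fun _ => hc1) fun A hA => ?_
  rw [sum_insert_of_subset_erase hA]
  split_ifs <;> first | omega | linarith [le_max_left c (1 - c), le_max_right c (1 - c)]

/-- Condition on `x`: the rest of the sum must then hit `-v x` or `0`, disjoint events of which
the first has probability at most `c`. -/
lemma subsetExpect_sum_eq_zero_le {c : ℝ} (hc0 : 1 / 2 ≤ c) (hc1 : c ≤ 1) {v : α → ℤ} {x : α}
    (hx : x ∈ s) (hv : v x ≠ 0) :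
    subsetExpect s (fun _ => c) (fun A => if ∑ y ∈ A, v y = 0 then 1 else 0)
      ≤ 1 - 2 * c * (1 - c) := by
  have hp0 : ∀ _ : α, 0 ≤ c := fun _ => by linarith
  have hp1 : ∀ _ : α, c ≤ 1 := fun _ => hc1
  set P := subsetExpect (s.erase x) (fun _ => c)
    (fun A => if ∑ y ∈ A, v y = -v x then 1 else 0)
  have hP : P ≤ c := by
    by_cases h : ∃ y ∈ s.erase x, v y ≠ 0
    · obtain ⟨y, hy, hvy⟩ := h
      exact (subsetExpect_sum_eq_le (by linarith) hc1 hy hvy _).trans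
        (max_le le_rfl (by linarith))
    · push Not at h
      refine subsetExpect_le_const hp0 hp1 fun A hA => ?_
      rw [Finset.sum_eq_zero fun y hy => h y (hA hy), if_neg (by omega)]
      linarith
  have hpt : ∀ A ⊆ s.erase x,
      c * (if ∑ y ∈ insert x A, v y = 0 then 1 else 0)
        + (1 - c) * (if ∑ y ∈ A, v y = 0 then 1 else 0)
      ≤ (1 - c) + (2 * c - 1) * (if ∑ y ∈ A, v y = -v x then 1 else 0) := by
    intro A hA
    rw [sum_insert_of_subset_erase hA]
    split_ifs <;> first | omega | linarith
  calc subsetExpect s (fun _ => c) (fun A => if ∑ y ∈ A, v y = 0 then 1 else 0)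
      ≤ subsetExpect (s.erase x) (fun _ => c)
          (fun A => (1 - c) + (2 * c - 1) * (if ∑ y ∈ A, v y = -v x then 1 else 0)) := by
        rw [subsetExpect_eq_erase hx]
        exact subsetExpect_mono hp0 hp1 hpt
    _ = (1 - c) + (2 * c - 1) * P := by
        rw [subsetExpect_add, subsetExpect_const, subsetExpect_const_mul]
    _ ≤ 1 - 2 * c * (1 - c) := by nlinarith

lemma add_add_one_sub_indicator_le_max (P N : ℕ) :
    ((P : ℝ) + N + 1 - if (P : ℤ) - N = 0 then 1 else 0) / 2 ≤ max (P : ℝ) N := by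
  rcases lt_trichotomy P N with h | rfl | h
  · have : (P : ℝ) + 1 ≤ N := by exact_mod_cast h
    rw [if_neg (by omega)]
    linarith [le_max_right (P : ℝ) N]
  · simp
  · have : (N : ℝ) + 1 ≤ P := by exact_mod_cast h
    rw [if_neg (by omega)]
    linarith [le_max_left (P : ℝ) N]

/-- `max P N = (P + N + |P - N|) / 2`, and the integer `P - N` vanishes with probability at most
`1 - 2c(1 - c)`. -/
lemma le_subsetExpect_max_sum {c : ℝ} (hc0 : 1 / 2 ≤ c) (hc1 : c ≤ 1) (g : α → Bool → ℕ)
    (hg : ∃ x ∈ s, g x true ≠ g x false) :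
    c / 2 * ∑ x ∈ s, ((g x true : ℝ) + g x false) + c * (1 - c)
      ≤ subsetExpect s (fun _ => c)
          (fun U => max (∑ x ∈ U, (g x true : ℝ)) (∑ x ∈ U, (g x false : ℝ))) := by
  obtain ⟨x, hx, hgx⟩ := hg
  set v : α → ℤ := fun y => g y true - g y false
  have hv : v x ≠ 0 := by simp only [v]; omega
  have hsum : ∀ U : Finset α, ((∑ y ∈ U, g y true : ℕ) : ℤ) - (∑ y ∈ U, g y false : ℕ)
      = ∑ y ∈ U, v y := fun U => by push_cast; rw [Finset.sum_sub_distrib]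
  have hpt : ∀ U ⊆ s, (1 / 2 : ℝ) * (∑ y ∈ U, ((g y true : ℝ) + g y false))
      + 1 / 2 + (-1 / 2) * (if ∑ y ∈ U, v y = 0 then 1 else 0)
      ≤ max (∑ y ∈ U, (g y true : ℝ)) (∑ y ∈ U, (g y false : ℝ)) := fun U _ => by
    have := add_add_one_sub_indicator_le_max (∑ y ∈ U, g y true) (∑ y ∈ U, g y false)
    rw [hsum] at this
    push_cast at this
    rw [Finset.sum_add_distrib]
    linarith
  have hzero := subsetExpect_sum_eq_zero_le hc0 hc1 hx hv
  refine le_trans ?_ (subsetExpect_mono (fun _ => by linarith) (fun _ => hc1) hpt)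
  rw [subsetExpect_add, subsetExpect_add, subsetExpect_const_mul, subsetExpect_const_mul,
    subsetExpect_sum_mem, subsetExpect_const, ← Finset.mul_sum]
  nlinarith

lemma subsetExpect_sum_apply_decide (p : α → ℝ) (g : α → Bool → ℕ) :
    subsetExpect s p (fun A => ∑ y ∈ s, (g y (decide (y ∈ A)) : ℝ))
      = ∑ y ∈ s, (p y * g y true + (1 - p y) * g y false) := by
  rw [subsetExpect_sum]
  refine Finset.sum_congr rfl fun y hy => ?_
  rw [← subsetExpect_ite_mem hy]
  exact subsetExpect_congr fun A _ => by by_cases h : y ∈ A <;> simp [h]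

lemma sum_apply_decide_ite_insert (g : α → Bool → ℕ) {y : α} (hy : y ∈ s) {A : Finset α}
    (hA : A ⊆ s.erase y) (b : Bool) :
    ∑ z ∈ s, (g z (decide (z ∈ if b then insert y A else A)) : ℝ)
      = g y b + ∑ z ∈ s.erase y, (g z (decide (z ∈ A)) : ℝ) := by
  have hyA : y ∉ A := fun h => by simpa using hA h
  rw [← Finset.add_sum_erase s _ hy]
  congr 1
  · cases b <;> simp [hyA]
  · refine Finset.sum_congr rfl fun z hz => ?_
    cases b <;> simp [Finset.ne_of_mem_erase hz]

lemma two_thirds_add_le_half_max_add_half_max (a d : ℝ) {u : ℝ} (hu : 1 ≤ u) :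
    2 / 3 * (a + d) + 1 / 6
      ≤ 1 / 2 * max (a + u + (d - u) / 2) d + 1 / 2 * max (a + (d - u) / 2) d := by
  linarith [le_max_left (a + u + (d - u) / 2) d, le_max_right (a + u + (d - u) / 2) d,
    le_max_left (a + (d - u) / 2) d, le_max_right (a + (d - u) / 2) d]

/-- Condition on some `y` with `g y b ≠ 0` for exactly one `b`, then apply Jensen to `max`. -/
lemma le_subsetExpect_max_add_sum (g : α → Bool → ℕ)
    (hg : ∀ y ∈ s, g y true = 0 ∨ g y false = 0) {a : ℝ} (ha : 1 ≤ a) :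
    2 / 3 * (a + ∑ y ∈ s, ((g y true : ℝ) + g y false)) + 1 / 6
      ≤ subsetExpect s (fun _ => 1 / 2) (fun A => max (a + ∑ y ∈ s, (g y (decide (y ∈ A)) : ℝ))
          (∑ y ∈ s, ((g y true : ℝ) + g y false))) := by
  set d := ∑ y ∈ s, ((g y true : ℝ) + g y false)
  have hp0 : ∀ _ : α, (0 : ℝ) ≤ 1 / 2 := fun _ => by norm_num
  have hp1 : ∀ _ : α, (1 / 2 : ℝ) ≤ 1 := fun _ => by norm_num
  by_cases hd : ∀ y ∈ s, g y true + g y false = 0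
  · have hg0 : ∀ y ∈ s, ∀ b, g y b = 0 := fun y hy b => by have := hd y hy; cases b <;> omega
    have hd0 : d = 0 := Finset.sum_eq_zero fun y hy => by simp [hg0 y hy]
    calc 2 / 3 * (a + d) + 1 / 6 ≤ a := by rw [hd0]; linarith
      _ = subsetExpect s (fun _ => 1 / 2) (fun _ => max a 0) := by
          rw [subsetExpect_const, max_eq_left (by linarith)]
      _ = _ := subsetExpect_congr fun A _ => by
          rw [Finset.sum_eq_zero fun y hy => by simp [hg0 y hy], hd0, add_zero]
  push Not at hd
  obtain ⟨y, hy, hgy⟩ := hd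
  set R : Finset α → ℝ := fun A => ∑ z ∈ s.erase y, (g z (decide (z ∈ A)) : ℝ)
  have hER : subsetExpect (s.erase y) (fun _ => 1 / 2) R = (d - (g y true + g y false)) / 2 := by
    have hd : d = _ := (Finset.add_sum_erase s (fun z => (g z true : ℝ) + g z false) hy).symm
    rw [subsetExpect_sum_apply_decide, hd, add_sub_cancel_left, Finset.sum_div]
    exact Finset.sum_congr rfl fun _ _ => by ring
  have hJ : ∀ b, max (a + g y b + (d - (g y true + g y false)) / 2) d
      ≤ subsetExpect (s.erase y) (fun _ => 1 / 2)
          (fun A => max (a + ∑ z ∈ s, (g z (decide (z ∈ if b then insert y A else A)) : ℝ)) d) := by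
    intro b
    calc _ = max (subsetExpect (s.erase y) (fun _ => 1 / 2) (fun A => a + g y b + R A)) d := by
          rw [subsetExpect_add, subsetExpect_const, hER]
      _ ≤ _ := max_le_subsetExpect_max hp0 hp1 _ d
      _ = _ := subsetExpect_congr fun A hA => by
          rw [sum_apply_decide_ite_insert g hy hA b, add_assoc]
  have h1 := hJ true
  have h0 := hJ false
  simp only [if_true, Bool.false_eq_true, if_false] at h1 h0
  have key := two_thirds_add_le_half_max_add_half_max a d (u := g y true + g y false)
    (by exact_mod_cast Nat.one_le_iff_ne_zero.2 hgy)
  rw [subsetExpect_eq_erase hy, subsetExpect_add, subsetExpect_const_mul, subsetExpect_const_mul]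
  rcases hg y hy with h | h <;>
    simp only [h, Nat.cast_zero, zero_add, add_zero] at h1 h0 key ⊢ <;> linarith

end RandomSubsetBounds

section HardClauses

variable {F : Finset Clause} {w : Clause → ℕ}

lemma mem_unitVars_iff (hup : UnitPos F) {x : ℕ} :
    x ∈ unitVars F ↔ ({(x, true)} : Clause) ∈ F := by
  constructor
  · intro hx
    obtain ⟨C, hC, hxC⟩ := Finset.mem_sup.1 hx
    rw [Finset.mem_filter] at hC
    obtain ⟨x', rfl⟩ := hup C hC.1 hC.2
    obtain rfl : x = x' := by simpa using hxC
    exact hC.1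
  · intro h
    exact Finset.mem_sup.2 ⟨_, Finset.mem_filter.2 ⟨h, Finset.card_singleton _⟩, by simp⟩

lemma notMem_unitVars_of_mem_V2set {y : ℕ} (hy : y ∈ V2set F) : y ∉ unitVars F :=
  (Finset.mem_sdiff.1 hy).2

lemma eq_of_pair_eq_pair {x y x' y' : ℕ} {b b' : Bool} (hx : x ∈ unitVars F) (hy : y ∉ unitVars F)
    (hx' : x' ∈ unitVars F) (hy' : y' ∉ unitVars F)
    (h : ({(x, false), (y, b)} : Clause) = {(x', false), (y', b')}) :
    x = x' ∧ y = y' ∧ b = b' := by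
  have h1 : (x, false) ∈ ({(x', false), (y', b')} : Clause) := h ▸ by simp
  have h2 : (y, b) ∈ ({(x', false), (y', b')} : Clause) := h ▸ by simp
  simp only [Finset.mem_insert, Finset.mem_singleton, Prod.mk.injEq] at h1 h2
  rcases h1 with ⟨rfl, -⟩ | ⟨rfl, -⟩
  · rcases h2 with ⟨rfl, -⟩ | ⟨rfl, rfl⟩
    · exact absurd hx hy
    · exact ⟨rfl, rfl, rfl⟩
  · exact absurd hx hy'

lemma filter_isHard_eq (hup : UnitPos F) :
    F.filter (IsHard F) = (unitVars F).image (fun x => ({(x, true)} : Clause))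
      ∪ ((unitVars F ×ˢ V2set F ×ˢ (Finset.univ : Finset Bool)).filter
          (fun t => ({(t.1, false), (t.2.1, t.2.2)} : Clause) ∈ F)).image
          (fun t => ({(t.1, false), (t.2.1, t.2.2)} : Clause)) := by
  ext C
  simp only [Finset.mem_filter, Finset.mem_union, Finset.mem_image, Finset.mem_product,
    Finset.mem_univ, and_true, Prod.exists]
  constructor
  · rintro ⟨hCF, ⟨x, rfl⟩ | ⟨x, hx, y, hy, b, rfl⟩⟩
    · exact Or.inl ⟨x, (mem_unitVars_iff hup).2 hCF, rfl⟩
    · refine Or.inr ⟨x, y, b, ⟨⟨hx, ?_⟩, hCF⟩, rfl⟩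
      exact Finset.mem_sdiff.2 ⟨Finset.mem_sup.2 ⟨{(x, false), (y, b)},
        Finset.mem_filter.2 ⟨hCF, x, hx, y, hy, b, rfl⟩,
        Finset.mem_image.2 ⟨(y, b), by simp, rfl⟩⟩, hy⟩
  · rintro (⟨x, hx, rfl⟩ | ⟨x, y, b, ⟨⟨hx, hy⟩, hCF⟩, rfl⟩)
    · exact ⟨(mem_unitVars_iff hup).1 hx, Or.inl ⟨x, rfl⟩⟩
    · exact ⟨hCF, Or.inr ⟨x, hx, y, notMem_unitVars_of_mem_V2set hy, b, rfl⟩⟩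

lemma sum_filter_isHard {M : Type*} [AddCommMonoid M] (hup : UnitPos F) (h : Clause → M) :
    ∑ C ∈ F.filter (IsHard F), h C = ∑ x ∈ unitVars F, (h {(x, true)}
      + ∑ y ∈ V2set F, ∑ b : Bool,
          if ({(x, false), (y, b)} : Clause) ∈ F then h {(x, false), (y, b)} else 0) := by
  rw [filter_isHard_eq hup, Finset.sum_union, Finset.sum_image, Finset.sum_image,
    Finset.sum_filter, Finset.sum_product, Finset.sum_add_distrib]
  · simp only [Finset.sum_product]
  · rintro ⟨x, y, b⟩ ht ⟨x', y', b'⟩ ht' h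
    simp only [Finset.coe_filter, Finset.mem_product, Set.mem_ofPred_eq] at ht ht'
    obtain ⟨rfl, rfl, rfl⟩ := eq_of_pair_eq_pair ht.1.1 (notMem_unitVars_of_mem_V2set ht.1.2.1)
      ht'.1.1 (notMem_unitVars_of_mem_V2set ht'.1.2.1) h
    rfl
  · exact fun x _ x' _ h => by simpa using h
  · rw [Finset.disjoint_left]
    rintro C hC hC'
    obtain ⟨x, -, rfl⟩ := Finset.mem_image.1 hC
    obtain ⟨⟨x', y', b'⟩, -, h⟩ := Finset.mem_image.1 hC'
    have : (x', false) ∈ ({(x, true)} : Clause) := h ▸ by simp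
    simp at this

noncomputable def pairWt (F : Finset Clause) (w : Clause → ℕ) (x y : ℕ) (b : Bool) : ℕ :=
  if ({(x, false), (y, b)} : Clause) ∈ F then w {(x, false), (y, b)} else 0

noncomputable def pairDeg (F : Finset Clause) (w : Clause → ℕ) (x : ℕ) : ℕ :=
  ∑ y ∈ V2set F, (pairWt F w x y true + pairWt F w x y false)

lemma wt_filter_isHard (hup : UnitPos F) :
    wt w (F.filter (IsHard F)) = ∑ x ∈ unitVars F, (w {(x, true)} + pairDeg F w x) := by
  simp only [wt, sum_filter_isHard hup, pairDeg, pairWt, Fintype.sum_bool]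

lemma satWt_filter_isHard (hup : UnitPos F) (τ : ℕ → Bool) :
    satWt w τ (F.filter (IsHard F)) = ∑ x ∈ unitVars F,
      if τ x then w {(x, true)} + ∑ y ∈ V2set F, pairWt F w x y (τ y) else pairDeg F w x := by
  rw [satWt, Finset.sum_filter, sum_filter_isHard hup]
  refine Finset.sum_congr rfl fun x _ => ?_
  simp only [pairDeg, pairWt, Fintype.sum_bool, SatC, Finset.mem_insert, Finset.mem_singleton,
    exists_eq_or_imp, exists_eq_left]
  cases τ x
  · simp
  · simp only [if_true]
    refine congrArg _ (Finset.sum_congr rfl fun y _ => ?_)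
    cases τ y <;> simp

/-- `{x}`, `{¬x, y}` and `{¬x, ¬y}` cannot be satisfied together. -/
lemma pairWt_true_eq_zero_or (h3 : Sat3 F) (hup : UnitPos F) {x : ℕ} (hx : x ∈ unitVars F)
    (y : ℕ) : pairWt F w x y true = 0 ∨ pairWt F w x y false = 0 := by
  by_contra! h
  simp only [pairWt, ne_eq, ite_eq_right_iff, not_forall] at h
  obtain ⟨⟨hT, -⟩, ⟨hF, -⟩⟩ := h
  obtain ⟨τ, hx, hT, hF⟩ := h3 _ ((mem_unitVars_iff hup).1 hx) _ hT _ hF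
  simp only [SatC, Finset.mem_insert, Finset.mem_singleton, exists_eq_or_imp,
    exists_eq_left] at hx hT hF
  grind

lemma exists_pairWt_ne (hw : ∀ C ∈ F, 0 < w C) (h3 : Sat3 F) (hup : UnitPos F) {y : ℕ}
    (hy : y ∈ V2set F) : ∃ x ∈ unitVars F, pairWt F w x y true ≠ pairWt F w x y false := by
  obtain ⟨C, hC, hyC⟩ := Finset.mem_sup.1 (Finset.mem_sdiff.1 hy).1
  obtain ⟨hCF, x, hx, y', hy', b, rfl⟩ := Finset.mem_filter.1 hC
  obtain rfl : y = y' := by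
    have := notMem_unitVars_of_mem_V2set hy
    simp only [Finset.mem_image, Finset.mem_insert, Finset.mem_singleton] at hyC
    grind
  refine ⟨x, hx, fun h => ?_⟩
  have hpos : 0 < pairWt F w x y b := by simpa [pairWt, hCF] using hw _ hCF
  rcases pairWt_true_eq_zero_or (w := w) h3 hup hx y with h0 | h0 <;> cases b <;> omega

end HardClauses

section Assignments

variable {F : Finset Clause} {w : Clause → ℕ}

lemma cast_pairDeg (x : ℕ) :
    (pairDeg F w x : ℝ) = ∑ y ∈ V2set F, ((pairWt F w x y true : ℝ) + pairWt F w x y false) := by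
  push_cast [pairDeg]
  rfl

/-- Set the non-unit variables uniformly at random, then each unit variable greedily. -/
theorem exists_satWt_hard_ge_card_unitVars (hw : ∀ C ∈ F, 0 < w C) (h3 : Sat3 F)
    (hup : UnitPos F) :
    ∃ τ : ℕ → Bool, 2 / 3 * (wt w (F.filter (IsHard F)) : ℝ) + (unitVars F).card / 6
      ≤ satWt w τ (F.filter (IsHard F)) := by
  set S : ℕ → Finset ℕ → ℕ := fun x A => ∑ y ∈ V2set F, pairWt F w x y (decide (y ∈ A))
  set f : Finset ℕ → ℝ := fun A =>
    ∑ x ∈ unitVars F, max ((w {(x, true)} : ℝ) + (S x A : ℝ)) (pairDeg F w x)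
  have hp0 : ∀ _ : ℕ, (0 : ℝ) ≤ 1 / 2 := fun _ => by norm_num
  have hp1 : ∀ _ : ℕ, (1 / 2 : ℝ) ≤ 1 := fun _ => by norm_num
  have hE : 2 / 3 * (wt w (F.filter (IsHard F)) : ℝ) + (unitVars F).card / 6
      ≤ subsetExpect (V2set F) (fun _ => 1 / 2) f := by
    rw [subsetExpect_sum, wt_filter_isHard hup, Nat.cast_sum, Finset.mul_sum,
      Finset.card_eq_sum_ones, Nat.cast_sum, Finset.sum_div, ← Finset.sum_add_distrib]
    refine Finset.sum_le_sum fun x hx => ?_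
    have ha : (1 : ℝ) ≤ w {(x, true)} := by exact_mod_cast hw _ ((mem_unitVars_iff hup).1 hx)
    have := le_subsetExpect_max_add_sum (s := V2set F) (pairWt F w x)
      (fun y _ => pairWt_true_eq_zero_or h3 hup hx y) ha
    push_cast [S, cast_pairDeg]
    linarith
  obtain ⟨A, -, hA⟩ := exists_subsetExpect_le hp0 hp1 f
  refine ⟨fun v => if v ∈ unitVars F then decide (pairDeg F w v ≤ w {(v, true)} + S v A)
    else decide (v ∈ A), hE.trans (hA.trans (le_of_eq ?_))⟩
  rw [satWt_filter_isHard hup, Nat.cast_sum]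
  refine Finset.sum_congr rfl fun x hx => ?_
  have hS : ∑ y ∈ V2set F, pairWt F w x y
      (if y ∈ unitVars F then decide (pairDeg F w y ≤ w {(y, true)} + S y A) else decide (y ∈ A))
      = S x A :=
    Finset.sum_congr rfl fun y hy => by rw [if_neg (notMem_unitVars_of_mem_V2set hy)]
  simp only [if_pos hx, hS, decide_eq_true_eq, ← max_def', Nat.cast_max, Nat.cast_add]

lemma sum_apply_decide_le_eq_max {α : Type*} (g : α → Bool → ℕ) (U : Finset α) :
    ∑ x ∈ U, g x (decide (∑ x ∈ U, g x false ≤ ∑ x ∈ U, g x true))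
      = max (∑ x ∈ U, g x true) (∑ x ∈ U, g x false) := by
  by_cases h : ∑ x ∈ U, g x false ≤ ∑ x ∈ U, g x true
  · simp [h]
  · simp [h, (not_le.1 h).le]

/-- Set the unit variables true with probability `2/3`, then each non-unit variable greedily. -/
theorem exists_satWt_hard_ge_card_V2set (hw : ∀ C ∈ F, 0 < w C) (h3 : Sat3 F)
    (hup : UnitPos F) :
    ∃ τ : ℕ → Bool, 2 / 3 * (wt w (F.filter (IsHard F)) : ℝ) + 2 / 9 * (V2set F).card
      ≤ satWt w τ (F.filter (IsHard F)) := by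
  set M : ℕ → Finset ℕ → ℝ := fun y U =>
    max (∑ x ∈ U, (pairWt F w x y true : ℝ)) (∑ x ∈ U, (pairWt F w x y false : ℝ))
  set f : Finset ℕ → ℝ := fun U => ∑ x ∈ U, (w {(x, true)} : ℝ)
    + (∑ x ∈ unitVars F, (pairDeg F w x : ℝ) - ∑ x ∈ U, (pairDeg F w x : ℝ))
    + ∑ y ∈ V2set F, M y U
  have hp0 : ∀ _ : ℕ, (0 : ℝ) ≤ 2 / 3 := fun _ => by norm_num
  have hp1 : ∀ _ : ℕ, (2 / 3 : ℝ) ≤ 1 := fun _ => by norm_num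
  have hM : ∀ y ∈ V2set F, 1 / 3 * ∑ x ∈ unitVars F,
      ((pairWt F w x y true : ℝ) + pairWt F w x y false) + 2 / 9
        ≤ subsetExpect (unitVars F) (fun _ => 2 / 3) (M y) := fun y hy => by
    have := le_subsetExpect_max_sum (s := unitVars F) (c := 2 / 3) (by norm_num) (by norm_num)
      (fun x b => pairWt F w x y b) (exists_pairWt_ne hw h3 hup hy)
    norm_num at this ⊢
    linarith
  have hdeg : ∑ y ∈ V2set F, ∑ x ∈ unitVars F, ((pairWt F w x y true : ℝ) + pairWt F w x y false)
      = ∑ x ∈ unitVars F, (pairDeg F w x : ℝ) := by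
    rw [Finset.sum_comm]
    simp only [cast_pairDeg]
  have hE : 2 / 3 * (wt w (F.filter (IsHard F)) : ℝ) + 2 / 9 * (V2set F).card
      ≤ subsetExpect (unitVars F) (fun _ => 2 / 3) f := by
    have hsum := Finset.sum_le_sum hM
    rw [Finset.sum_add_distrib, ← Finset.mul_sum, hdeg, Finset.sum_const, nsmul_eq_mul] at hsum
    rw [subsetExpect_add, subsetExpect_add, subsetExpect_sum_mem, subsetExpect_sub,
      subsetExpect_const, subsetExpect_sum_mem, subsetExpect_sum, wt_filter_isHard hup]
    push_cast
    rw [Finset.sum_add_distrib, ← Finset.mul_sum, ← Finset.mul_sum]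
    linarith
  obtain ⟨U, hU, hfU⟩ := exists_subsetExpect_le hp0 hp1 f
  set τ : ℕ → Bool := fun v => if v ∈ unitVars F then decide (v ∈ U)
    else decide (∑ x ∈ U, pairWt F w x v false ≤ ∑ x ∈ U, pairWt F w x v true)
  refine ⟨τ, hE.trans (hfU.trans (le_of_eq ?_))⟩
  have hτ : ∀ y ∈ V2set F, ∑ x ∈ U, pairWt F w x y (τ y)
      = max (∑ x ∈ U, pairWt F w x y true) (∑ x ∈ U, pairWt F w x y false) := fun y hy => by
    simp only [τ, if_neg (notMem_unitVars_of_mem_V2set hy)]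
    exact sum_apply_decide_le_eq_max (fun x b => pairWt F w x y b) U
  have hsat : satWt w τ (F.filter (IsHard F)) = ∑ x ∈ U, w {(x, true)}
      + ∑ x ∈ unitVars F \ U, pairDeg F w x
      + ∑ y ∈ V2set F, max (∑ x ∈ U, pairWt F w x y true) (∑ x ∈ U, pairWt F w x y false) := by
    rw [satWt_filter_isHard hup, Finset.sum_congr rfl fun x hx => by rw [show τ x = decide (x ∈ U)
      from if_pos hx], Finset.sum_ite]
    simp only [decide_eq_true_eq, Finset.filter_not, Finset.filter_mem_eq_inter,
      Finset.inter_eq_right.2 hU, Finset.sum_add_distrib]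
    rw [Finset.sum_comm, Finset.sum_congr rfl hτ]
    ring
  rw [hsat]
  push_cast [f, M, Finset.sum_sdiff_eq_sub hU]
  ring

def litFalseProb (p : ℕ → ℝ) (l : ℕ × Bool) : ℝ := if l.2 then 1 - p l.1 else p l.1

lemma ite_satC_eq_one_sub_prod (τ : ℕ → Bool) (C : Clause) :
    (if SatC τ C then 1 else 0 : ℝ) = 1 - ∏ l ∈ C, if τ l.1 = l.2 then 0 else 1 := by
  by_cases h : SatC τ C
  · obtain ⟨l, hl, hτl⟩ := h
    rw [if_pos ⟨l, hl, hτl⟩, Finset.prod_eq_zero hl (by rw [if_pos hτl]), sub_zero]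
  · rw [if_neg h, Finset.prod_eq_one fun l hl => if_neg fun hτl => h ⟨l, hl, hτl⟩, sub_self]

lemma subsetExpect_satC {s : Finset ℕ} (p : ℕ → ℝ) {C : Clause}
    (hinj : Set.InjOn Prod.fst (C : Set (ℕ × Bool))) (hC : ∀ l ∈ C, l.1 ∈ s) :
    subsetExpect s p (fun A => if SatC (fun v => decide (v ∈ A)) C then 1 else 0)
      = 1 - ∏ l ∈ C, litFalseProb p l := by
  simp only [ite_satC_eq_one_sub_prod]
  rw [subsetExpect_sub, subsetExpect_const,
    subsetExpect_prod Prod.fst (fun l b => if b = l.2 then 0 else 1) C hinj hC]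
  congr 1
  refine Finset.prod_congr rfl fun ⟨v, b⟩ _ => ?_
  cases b <;> simp [litFalseProb]

lemma injOn_fst_of_isCNF {F : Finset Clause} (hF : IsCNF F) {C : Clause} (hC : C ∈ F) :
    Set.InjOn Prod.fst (C : Set (ℕ × Bool)) := by
  rintro ⟨v, b⟩ hl ⟨v', b'⟩ hl' (rfl : v = v')
  have := (hF C hC).2 v
  cases b <;> cases b' <;> simp_all

noncomputable def biasedProb (F : Finset Clause) (v : ℕ) : ℝ :=
  if v ∈ unitVars F then 2 / 3 else 1 / 2

lemma litFalseProb_biasedProb (v : ℕ) (b : Bool) :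
    litFalseProb (biasedProb F) (v, b)
      = if v ∈ unitVars F then (if b then 1 / 3 else 2 / 3) else 1 / 2 := by
  unfold litFalseProb biasedProb
  split_ifs <;> norm_num

lemma litFalseProb_biasedProb_mem_Icc (l : ℕ × Bool) :
    litFalseProb (biasedProb F) l ∈ Set.Icc 0 (2 / 3) := by
  rw [litFalseProb_biasedProb]
  split_ifs <;> norm_num

lemma litFalseProb_biasedProb_le_half {l : ℕ × Bool} (hl : ¬ (l.1 ∈ unitVars F ∧ l.2 = false)) :
    litFalseProb (biasedProb F) l ≤ 1 / 2 := by
  obtain ⟨v, b⟩ := l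
  rw [litFalseProb_biasedProb]
  split_ifs with hv hb
  · norm_num
  · exact absurd ⟨hv, by simpa using hb⟩ hl
  · rfl

lemma prod_litFalseProb_le_of_isHard (hup : UnitPos F) {C : Clause} (hC : C ∈ F)
    (hH : IsHard F C) : ∏ l ∈ C, litFalseProb (biasedProb F) l ≤ 1 / 3 := by
  rcases hH with ⟨x, rfl⟩ | ⟨x, hx, y, hy, b, rfl⟩
  · simp [litFalseProb_biasedProb, (mem_unitVars_iff hup).2 hC]
  · rw [Finset.prod_pair (by rintro ⟨⟩; exact hy hx)]
    simp only [litFalseProb_biasedProb, hx, hy, if_true, if_false, Bool.false_eq_true]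
    norm_num

/-- Otherwise the clause would be hard, or `{x}, {y}, {¬x, ¬y}` would be unsatisfiable. -/
lemma pos_unit_of_not_isHard_pair (h3 : Sat3 F) (hup : UnitPos F) {x y : ℕ} {b : Bool}
    (hx : x ∈ unitVars F) (hC : ({(x, false), (y, b)} : Clause) ∈ F)
    (hH : ¬ IsHard F {(x, false), (y, b)}) : y ∈ unitVars F ∧ b = true := by
  by_cases hy : y ∈ unitVars F
  · refine ⟨hy, ?_⟩
    obtain ⟨τ, hτx, hτy, hτC⟩ := h3 _ ((mem_unitVars_iff hup).1 hx) _
      ((mem_unitVars_iff hup).1 hy) _ hC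
    simp only [SatC, Finset.mem_insert, Finset.mem_singleton, exists_eq_or_imp,
      exists_eq_left] at hτx hτy hτC
    grind
  · exact absurd (Or.inr ⟨x, hx, y, hy, b, rfl⟩) hH

lemma prod_litFalseProb_le_of_not_isHard (hF : IsCNF F) (h3 : Sat3 F) (hup : UnitPos F)
    {C : Clause} (hC : C ∈ F) (hH : ¬ IsHard F C) :
    ∏ l ∈ C, litFalseProb (biasedProb F) l ≤ 8 / 27 := by
  have hq := litFalseProb_biasedProb_mem_Icc (F := F)
  rcases lt_trichotomy C.card 2 with hlt | h2 | hgt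
  · interval_cases h : C.card
    · exact absurd (Finset.card_eq_zero.1 h ▸ (hF C hC).1) Finset.not_nonempty_empty
    · exact absurd (Or.inl (hup C hC h)) hH
  · obtain ⟨⟨x, b⟩, ⟨y, b'⟩, hne, rfl⟩ := Finset.card_eq_two.1 h2
    rw [Finset.prod_pair hne]
    by_cases hxn : x ∈ unitVars F ∧ b = false
    · obtain ⟨hx, rfl⟩ := hxn
      obtain ⟨hy, rfl⟩ := pos_unit_of_not_isHard_pair h3 hup hx hC hH
      simp only [litFalseProb_biasedProb, hx, hy, if_true, if_false, Bool.false_eq_true]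
      norm_num
    by_cases hyn : y ∈ unitVars F ∧ b' = false
    · obtain ⟨hy, rfl⟩ := hyn
      rw [Finset.pair_comm] at hC hH
      obtain ⟨hx, rfl⟩ := pos_unit_of_not_isHard_pair h3 hup hy hC hH
      simp only [litFalseProb_biasedProb, hx, hy, if_true, if_false, Bool.false_eq_true]
      norm_num
    calc _ ≤ (1 / 2 : ℝ) * (1 / 2) :=
          mul_le_mul (litFalseProb_biasedProb_le_half hxn) (litFalseProb_biasedProb_le_half hyn)
            (hq _).1 (by norm_num)
      _ ≤ 8 / 27 := by norm_num
  · obtain ⟨a, ha, b, hb, c, hc, hab, hac, hbc⟩ := Finset.two_lt_card.1 hgt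
    have hsub : {a, b, c} ⊆ C := by simp [Finset.insert_subset_iff, ha, hb, hc]
    refine (Finset.prod_le_prod_of_subset_of_le_one hsub (fun l _ => (hq l).1)
      fun l _ _ => (hq l).2.trans (by norm_num)).trans ?_
    rw [Finset.prod_insert (by simp [hab, hac]), Finset.prod_pair hbc]
    calc _ ≤ (2 / 3 : ℝ) * (2 / 3 * (2 / 3)) :=
          mul_le_mul (hq a).2 (mul_le_mul (hq b).2 (hq c).2 (hq c).1 (by norm_num))
            (mul_nonneg (hq b).1 (hq c).1) (by norm_num)
      _ = 8 / 27 := by norm_num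

lemma cast_satWt (τ : ℕ → Bool) (G : Finset Clause) :
    (satWt w τ G : ℝ) = ∑ C ∈ G, (w C : ℝ) * if SatC τ C then 1 else 0 := by
  simp [satWt, Finset.sum_filter]

lemma fst_mem_vars {C : Clause} (hC : C ∈ F) {l : ℕ × Bool} (hl : l ∈ C) : l.1 ∈ vars F :=
  Finset.mem_sup.2 ⟨C, hC, Finset.mem_image_of_mem _ hl⟩

/-- The biased random assignment satisfies each hard clause with probability at least `2/3` and
each soft clause with probability at least `19/27`. -/
theorem exists_satWt_ge_wt_softF (hF : IsCNF F) (h3 : Sat3 F) (hup : UnitPos F) :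
    ∃ τ : ℕ → Bool, 2 / 3 * (wt w (F.filter (IsHard F)) : ℝ) + 19 / 27 * (wt w (softF F) : ℝ)
      ≤ satWt w τ F := by
  have hp0 : ∀ v, 0 ≤ biasedProb F v := fun v => by unfold biasedProb; split_ifs <;> norm_num
  have hp1 : ∀ v, biasedProb F v ≤ 1 := fun v => by unfold biasedProb; split_ifs <;> norm_num
  set f : Finset ℕ → ℝ := fun A => satWt w (fun v => decide (v ∈ A)) F
  have hE : 2 / 3 * (wt w (F.filter (IsHard F)) : ℝ) + 19 / 27 * (wt w (softF F) : ℝ)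
      ≤ subsetExpect (vars F) (biasedProb F) f := by
    have hsplit : 2 / 3 * (wt w (F.filter (IsHard F)) : ℝ) + 19 / 27 * (wt w (softF F) : ℝ)
        = ∑ C ∈ F, (w C : ℝ) * if IsHard F C then 2 / 3 else 19 / 27 := by
      simp only [mul_ite, Finset.sum_ite, wt, softF, Nat.cast_sum, ← Finset.sum_mul]
      ring
    simp only [f, cast_satWt, subsetExpect_sum, subsetExpect_const_mul, hsplit]
    refine Finset.sum_le_sum fun C hC => mul_le_mul_of_nonneg_left ?_ (Nat.cast_nonneg _)
    rw [subsetExpect_satC _ (injOn_fst_of_isCNF hF hC) fun l hl => fst_mem_vars hC hl]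
    split_ifs with hH
    · linarith [prod_litFalseProb_le_of_isHard hup hC hH]
    · linarith [prod_litFalseProb_le_of_not_isHard hF h3 hup hC hH]
  obtain ⟨A, -, hA⟩ := exists_subsetExpect_le hp0 hp1 f
  exact ⟨_, hE.trans hA⟩

lemma exists_satWt_ge_of_two (w : Clause → ℕ) (G : Finset Clause) (τ₁ τ₂ : ℕ → Bool) :
    ∃ τ : ℕ → Bool, (satWt w τ₁ G : ℝ) ≤ satWt w τ G ∧ (satWt w τ₂ G : ℝ) ≤ satWt w τ G := by
  rcases le_total (satWt w τ₁ G) (satWt w τ₂ G) with h | h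
  · exact ⟨τ₂, by exact_mod_cast h, le_rfl⟩
  · exact ⟨τ₁, le_rfl, by exact_mod_cast h⟩

theorem exists_satWt_hard_ge (hw : ∀ C ∈ F, 0 < w C) (h3 : Sat3 F) (hup : UnitPos F) :
    ∃ τ : ℕ → Bool, 2 / 3 * (wt w (F.filter (IsHard F)) : ℝ)
      + 2 / 21 * ((unitVars F).card + (V2set F).card) ≤ satWt w τ (F.filter (IsHard F)) := by
  obtain ⟨τ₁, h₁⟩ := exists_satWt_hard_ge_card_unitVars hw h3 hup
  obtain ⟨τ₂, h₂⟩ := exists_satWt_hard_ge_card_V2set hw h3 hup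
  obtain ⟨τ, hτ₁, hτ₂⟩ := exists_satWt_ge_of_two w (F.filter (IsHard F)) τ₁ τ₂
  exact ⟨τ, by linarith⟩

lemma satWt_le_satWt_of_subset (τ : ℕ → Bool) {G H : Finset Clause} (h : G ⊆ H) :
    satWt w τ G ≤ satWt w τ H :=
  Finset.sum_le_sum_of_subset (Finset.filter_subset_filter _ h)

lemma wt_eq_wt_filter_isHard_add_wt_softF :
    wt w F = wt w (F.filter (IsHard F)) + wt w (softF F) :=
  (Finset.sum_filter_add_sum_filter_not F (IsHard F) w).symm

/-- Variables outside `V₁ ∪ V₂` only occur in soft clauses, so expansion bounds their number. -/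
lemma card_vars_le (hup : UnitPos F) (hexp : Expanding F w) :
    (vars F).card ≤ (unitVars F).card + (V2set F).card + wt w (softF F) := by
  set X := vars F \ (unitVars F ∪ V2set F)
  have hX : FU F X ⊆ softF F := by
    intro C hC
    obtain ⟨hCF, l, hl, hlX⟩ := Finset.mem_filter.1 hC
    refine Finset.mem_filter.2 ⟨hCF, fun hH => (Finset.mem_sdiff.1 hlX).2 ?_⟩
    have hH' : C ∈ F.filter (IsHard F) := Finset.mem_filter.2 ⟨hCF, hH⟩
    rw [filter_isHard_eq hup] at hH'
    simp only [Finset.mem_union, Finset.mem_image, Finset.mem_filter, Finset.mem_product] at hH'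
    rcases hH' with ⟨x, hx, rfl⟩ | ⟨⟨x, y, b⟩, ⟨⟨hx, hy, -⟩, -⟩, rfl⟩
    · obtain rfl := Finset.mem_singleton.1 hl
      exact Finset.mem_union_left _ hx
    · rcases Finset.mem_insert.1 hl with rfl | hl
      · exact Finset.mem_union_left _ hx
      · obtain rfl := Finset.mem_singleton.1 hl
        exact Finset.mem_union_right _ hy
  calc (vars F).card ≤ (unitVars F ∪ V2set F).card + X.card :=
        Finset.card_le_card_sdiff_add_card.trans_eq (add_comm _ _)
    _ ≤ (unitVars F).card + (V2set F).card + wt w (FU F X) :=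
        add_le_add (Finset.card_union_le _ _) (hexp X Finset.sdiff_subset)
    _ ≤ _ := add_le_add le_rfl (Finset.sum_le_sum_of_subset hX)

end Assignments

theorem stmt17 (F : Finset Clause) (w : Clause → ℕ)
    (hF : IsCNF F) (hw : ∀ C ∈ F, 0 < w C) (h3 : Sat3 F) (hup : UnitPos F)
    (hexp : Expanding F w)
    (hnotfat : (wt w (softF F) : ℝ)
              < (18:ℝ)/133 * (((unitVars F).card : ℝ) + ((V2set F).card : ℝ))) :
    ∃ τ : ℕ → Bool,
      (2:ℝ)/3 * wt w F + (2:ℝ)/453 * ((vars F).card : ℝ) ≤ (satWt w τ F : ℝ) := by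
  obtain ⟨τ₁, h₁⟩ := exists_satWt_hard_ge hw h3 hup
  obtain ⟨τ₂, h₂⟩ := exists_satWt_ge_wt_softF (w := w) hF h3 hup
  have hτ₁ : (satWt w τ₁ (F.filter (IsHard F)) : ℝ) ≤ satWt w τ₁ F := by
    exact_mod_cast satWt_le_satWt_of_subset τ₁ (Finset.filter_subset _ F)
  have hvars : ((vars F).card : ℝ) ≤ (unitVars F).card + (V2set F).card + wt w (softF F) := by
    exact_mod_cast card_vars_le hup hexp
  have hwt : (wt w F : ℝ) = wt w (F.filter (IsHard F)) + wt w (softF F) := by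
    exact_mod_cast wt_eq_wt_filter_isHard_add_wt_softF
  obtain ⟨τ, hτ₁', hτ₂⟩ := exists_satWt_ge_of_two w F τ₁ τ₂
  exact ⟨τ, by linarith⟩
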